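/- The four entangled vectors u₁ = ψ₁ − ψ₃, u₂ = ψ₂ − ψ₄, u₃ = 2(ψ₁+ψ₃) − 3(ψ₂+ψ₄), u₄ = ψ₁+ψ₂+ψ₃+ψ₄ − 5ψ₅, where ψ₁=|0⟩⊗(|0⟩+|1⟩+|2⟩), ψ₂=(|0⟩+|1⟩)⊗|3⟩, ψ₃=|2⟩⊗(|1⟩+|2⟩+|3⟩), ψ₄=(|1⟩+|2⟩)⊗|0⟩, ψ₅=|1⟩⊗(|1⟩+|2⟩) in ℂ³⊗ℂ⁴, are pairwise orthogonal, each orthogonal to the stopper (|0⟩+|1⟩+|2⟩)⊗(|0⟩+|1⟩+|2⟩+|3⟩), and none of them is a product vector. -/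

import Mathlib

noncomputable section

def e {n : ℕ} (i : Fin n) : EuclideanSpace ℂ (Fin n) := EuclideanSpace.single i 1

def tp {m n : ℕ} (a : EuclideanSpace ℂ (Fin m)) (b : EuclideanSpace ℂ (Fin n)) :
    EuclideanSpace ℂ (Fin m × Fin n) := WithLp.toLp 2 (fun p : Fin m × Fin n => a p.1 * b p.2)

def p1 : EuclideanSpace ℂ (Fin 3 × Fin 4) := tp (e 0) (e 0 + e 1 + e 2)
def p2 : EuclideanSpace ℂ (Fin 3 × Fin 4) := tp (e 0 + e 1) (e 3)
def p3 : EuclideanSpace ℂ (Fin 3 × Fin 4) := tp (e 2) (e 1 + e 2 + e 3)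
def p4 : EuclideanSpace ℂ (Fin 3 × Fin 4) := tp (e 1 + e 2) (e 0)
def p5 : EuclideanSpace ℂ (Fin 3 × Fin 4) := tp (e 1) (e 1 + e 2)

def u : Fin 4 → EuclideanSpace ℂ (Fin 3 × Fin 4) :=
  ![p1 - p3, p2 - p4, (2 : ℂ) • (p1 + p3) - (3 : ℂ) • (p2 + p4),
    p1 + p2 + p3 + p4 - (5 : ℂ) • p5]

def st : EuclideanSpace ℂ (Fin 3 × Fin 4) := tp (e 0 + e 1 + e 2) (e 0 + e 1 + e 2 + e 3)

lemma rank1 {m n : ℕ} (a : EuclideanSpace ℂ (Fin m)) (b : EuclideanSpace ℂ (Fin n))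
    (i k : Fin m) (j l : Fin n) :
    tp a b (i, j) * tp a b (k, l) = tp a b (i, l) * tp a b (k, j) := by
  simp [tp]; ring

set_option maxHeartbeats 2000000 in
theorem u_entangled_orthogonal :
    (∀ i j : Fin 4, i ≠ j → inner ℂ (u i) (u j) = (0 : ℂ)) ∧
    (∀ i : Fin 4, inner ℂ st (u i) = (0 : ℂ)) ∧
    (∀ i : Fin 4, ¬ ∃ (a : EuclideanSpace ℂ (Fin 3)) (b : EuclideanSpace ℂ (Fin 4)),
      u i = tp a b) := by
  refine ⟨?_, ?_, ?_⟩
  · intro i j hij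
    fin_cases i <;> fin_cases j <;> (try exact absurd rfl hij) <;>
      simp [PiLp.inner_apply, Fintype.sum_prod_type, Fin.sum_univ_three, Fin.sum_univ_four,
        u, p1, p2, p3, p4, p5, tp, e, EuclideanSpace.single_apply, -inner_self_eq_norm_sq_to_K] <;>
      norm_num [map_ofNat]
  · intro i
    fin_cases i <;>
      simp [PiLp.inner_apply, Fintype.sum_prod_type, Fin.sum_univ_three, Fin.sum_univ_four,
        u, st, p1, p2, p3, p4, p5, tp, e, EuclideanSpace.single_apply] <;>
      norm_num [map_ofNat]
  · intro i
    rintro ⟨a, b, h⟩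
    fin_cases i
    · have := rank1 a b 0 2 0 3
      rw [← h] at this
      simp [u, p1, p2, p3, p4, p5, tp, e, EuclideanSpace.single_apply] at this
    · have := rank1 a b 0 2 0 3
      rw [← h] at this
      simp [u, p1, p2, p3, p4, p5, tp, e, EuclideanSpace.single_apply] at this
    · have := rank1 a b 0 2 0 3
      rw [← h] at this
      simp [u, p1, p2, p3, p4, p5, tp, e, EuclideanSpace.single_apply] at this
      norm_num at this
    · have := rank1 a b 0 1 0 1
      rw [← h] at this
      simp [u, p1, p2, p3, p4, p5, tp, e, EuclideanSpace.single_apply] at this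
      norm_num at this
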